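/- arXiv:2008.02993 — 4 statements merged into one kernel-verified Lean document; each statement's English description precedes it below -/
import Mathlib

section
/- Let ι be a finite index set and let s, a, b : ι → ℝ with sᵢ ≥ 0, aᵢ > 0 and bᵢ ≥ 0 for all i, and suppose sᵢ₀ > 0 for some i₀. Let τ₀ > 0, τ₁ > 0 and λ ∈ ℝ satisfy: (i) ∑ᵢ sᵢ·aᵢτ₁/(aᵢτ₀ + (1 + bᵢ)τ₁) = λ; (ii) ∑ᵢ sᵢ·( ln(1 + (aᵢτ₀ + bᵢτ₁)/τ₁) − aᵢτ₀/(aᵢτ₀ + (1 + bᵢ)τ₁) ) = λ; and (iii) λ·(τ₀ + τ₁ − 1) = 0. Then τ₀ + τ₁ = 1 and ∑ᵢ sᵢ·ln(1 + (aᵢτ₀ + bᵢτ₁)/τ₁) = ∑ᵢ sᵢ·aᵢ/(aᵢτ₀ + (1 + bᵢ)τ₁). -/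
open Finset

theorem Finset.sum_mul_pos_of_exists_pos {ι : Type*} [Fintype ι] {s x : ι → ℝ}
    (hs : ∀ i, 0 ≤ s i) (hx : ∀ i, 0 < x i) (h : ∃ i, 0 < s i) :
    0 < ∑ i, s i * x i := by
  obtain ⟨i₀, hi₀⟩ := h
  exact sum_pos' (fun i _ ↦ mul_nonneg (hs i) (hx i).le)
    ⟨i₀, mem_univ i₀, mul_pos hi₀ (hx i₀)⟩

theorem sum_mul_eq_of_sum_mul_sub_eq {ι : Type*} [Fintype ι] {s f g h : ι → ℝ}
    (hfg : ∑ i, s i * (f i - g i) = ∑ i, s i * h i) :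
    ∑ i, s i * f i = ∑ i, s i * (h i + g i) := by
  simp only [mul_sub, mul_add, sum_sub_distrib, sum_add_distrib] at hfg ⊢
  linarith

/-- Case-1 derivation in the proof of Theorem 1: from the KKT stationarity
conditions and complementary slackness, τ₀ + τ₁ = 1 and the root equation holds. -/
theorem stmt_1 {ι : Type*} [Fintype ι] (s a b : ι → ℝ)
    (hs : ∀ i, 0 ≤ s i) (ha : ∀ i, 0 < a i) (hb : ∀ i, 0 ≤ b i)
    (hpos : ∃ i₀, 0 < s i₀)
    (τ₀ τ₁ lam : ℝ) (hτ₀ : 0 < τ₀) (hτ₁ : 0 < τ₁)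
    (h1 : ∑ i, s i * (a i * τ₁ / (a i * τ₀ + (1 + b i) * τ₁)) = lam)
    (h2 : ∑ i, s i * (Real.log (1 + (a i * τ₀ + b i * τ₁) / τ₁)
            - a i * τ₀ / (a i * τ₀ + (1 + b i) * τ₁)) = lam)
    (h3 : lam * (τ₀ + τ₁ - 1) = 0) :
    τ₀ + τ₁ = 1 ∧
    ∑ i, s i * Real.log (1 + (a i * τ₀ + b i * τ₁) / τ₁)
      = ∑ i, s i * (a i / (a i * τ₀ + (1 + b i) * τ₁)) := by
  have hlam : 0 < lam := h1 ▸ sum_mul_pos_of_exists_pos hs (fun i ↦ by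
    have := ha i; have := hb i; positivity) hpos
  have hsum : τ₀ + τ₁ = 1 := by
    linarith [(mul_eq_zero.mp h3).resolve_left hlam.ne']
  refine ⟨hsum, ?_⟩
  rw [sum_mul_eq_of_sum_mul_sub_eq (h2.trans h1.symm)]
  refine sum_congr rfl fun i _ ↦ ?_
  rw [← add_div, ← mul_add, add_comm τ₁, hsum, mul_one]
end

section
/- Fix an altitude h > 0, constants β > 0, ψ > 0, and excess path loss coefficients 0 < μLoS < μNLoS. With P(d) = 1/(1 + β·exp(−ψ·((180/π)·arcsin(h/d) − β))) and E(d) = μLoS·P(d) + μNLoS·(1 − P(d)), the function F(d) = d²·E(d) is strictly increasing on the interval [h, ∞). -/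
/-- The path-loss function F(d) = d²·E(d) is strictly increasing on [h, ∞). -/
theorem stmt_8 (h β ψ μLoS μNLoS : ℝ) (hh : 0 < h) (hβ : 0 < β) (hψ : 0 < ψ)
    (hμ0 : 0 < μLoS) (hμ : μLoS < μNLoS) :
    StrictMonoOn
      (fun d : ℝ =>
        d ^ 2 *
          (μLoS * (1 / (1 + β * Real.exp (-ψ * ((180 / Real.pi) * Real.arcsin (h / d) - β))))
           + μNLoS * (1 - 1 / (1 + β * Real.exp (-ψ * ((180 / Real.pi) * Real.arcsin (h / d) - β))))))
      (Set.Ici h) := by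
  intro a ha b hb hab
  simp only [Set.mem_Ici] at ha hb
  dsimp only
  have hpi : (0:ℝ) < 180 / Real.pi := by positivity
  have ha0 : 0 < a := lt_of_lt_of_le hh ha
  have hb0 : 0 < b := lt_of_lt_of_le hh hb
  set Ea := Real.exp (-ψ * ((180 / Real.pi) * Real.arcsin (h / a) - β)) with hEa
  set Eb := Real.exp (-ψ * ((180 / Real.pi) * Real.arcsin (h / b) - β)) with hEb
  have hEa0 : 0 < Ea := hEa ▸ Real.exp_pos _
  have hEb0 : 0 < Eb := hEb ▸ Real.exp_pos _
  have harc : Real.arcsin (h / b) ≤ Real.arcsin (h / a) :=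
    Real.monotone_arcsin (div_le_div_of_nonneg_left hh.le ha0 hab.le)
  have hEab : Ea ≤ Eb := by
    rw [hEa, hEb]
    apply Real.exp_le_exp.2
    have h1 : (180 / Real.pi) * Real.arcsin (h / b) ≤ (180 / Real.pi) * Real.arcsin (h / a) :=
      mul_le_mul_of_nonneg_left harc hpi.le
    nlinarith [mul_le_mul_of_nonneg_left h1 hψ.le]
  have hDa1 : (1:ℝ) < 1 + β * Ea := by nlinarith [mul_pos hβ hEa0]
  have hDb1 : (1:ℝ) < 1 + β * Eb := by nlinarith [mul_pos hβ hEb0]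
  have hD : 1 + β * Ea ≤ 1 + β * Eb := by nlinarith
  have hP : 1 / (1 + β * Eb) ≤ 1 / (1 + β * Ea) :=
    one_div_le_one_div_of_le (by linarith) hD
  have hPa : 0 < 1 / (1 + β * Ea) := by positivity
  have hPb : 0 < 1 / (1 + β * Eb) := by positivity
  have hPb1 : 1 / (1 + β * Eb) ≤ 1 := by
    rw [div_le_one (by linarith)]; linarith
  have hEb' : 0 < μLoS * (1 / (1 + β * Eb)) + μNLoS * (1 - 1 / (1 + β * Eb)) := by nlinarith
  have hE : μLoS * (1 / (1 + β * Ea)) + μNLoS * (1 - 1 / (1 + β * Ea)) ≤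
      μLoS * (1 / (1 + β * Eb)) + μNLoS * (1 - 1 / (1 + β * Eb)) := by nlinarith
  have hsq : a ^ 2 < b ^ 2 := by nlinarith
  calc a ^ 2 * (μLoS * (1 / (1 + β * Ea)) + μNLoS * (1 - 1 / (1 + β * Ea)))
      ≤ a ^ 2 * (μLoS * (1 / (1 + β * Eb)) + μNLoS * (1 - 1 / (1 + β * Eb))) :=
        mul_le_mul_of_nonneg_left hE (by positivity)
    _ < b ^ 2 * (μLoS * (1 / (1 + β * Eb)) + μNLoS * (1 - 1 / (1 + β * Eb))) :=
        mul_lt_mul_of_pos_right hsq hEb'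
end

section
/- Fix an altitude h > 0, constants β > 0, ψ > 0, and excess path loss coefficients 0 < μLoS < μNLoS, and define F(d) = d²·(μLoS·P(d) + μNLoS·(1 − P(d))) with P(d) = 1/(1 + β·exp(−ψ·((180/π)·arcsin(h/d) − β))). Then for every real T with T ≥ F(h), there exists a unique d ∈ [h, ∞) such that F(d) = T. -/
/-- Existence and uniqueness of the root of F(d) = T for any target T ≥ F(h):
the coverage radius d₀ = Root(F(d) = P_ut/(κ₀²ρ)) is well defined. -/
theorem stmt_9 (h β ψ μLoS μNLoS : ℝ) (hh : 0 < h) (hβ : 0 < β) (hψ : 0 < ψ)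
    (hμ0 : 0 < μLoS) (hμ : μLoS < μNLoS) :
    ∀ T : ℝ,
      (fun d : ℝ =>
        d ^ 2 *
          (μLoS * (1 / (1 + β * Real.exp (-ψ * ((180 / Real.pi) * Real.arcsin (h / d) - β))))
           + μNLoS * (1 - 1 / (1 + β * Real.exp (-ψ * ((180 / Real.pi) * Real.arcsin (h / d) - β)))))) h
        ≤ T →
      ∃! d : ℝ, d ∈ Set.Ici h ∧
        (fun d : ℝ =>
          d ^ 2 *
            (μLoS * (1 / (1 + β * Real.exp (-ψ * ((180 / Real.pi) * Real.arcsin (h / d) - β))))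
             + μNLoS * (1 - 1 / (1 + β * Real.exp (-ψ * ((180 / Real.pi) * Real.arcsin (h / d) - β)))))) d
          = T := by
  intro T hT
  set P : ℝ → ℝ := fun d =>
    1 / (1 + β * Real.exp (-ψ * ((180 / Real.pi) * Real.arcsin (h / d) - β))) with hPdef
  set F : ℝ → ℝ := fun d => d ^ 2 * (μLoS * P d + μNLoS * (1 - P d)) with hFdef
  have hT' : F h ≤ T := hT
  have hDpos : ∀ d : ℝ, (0:ℝ) <
      1 + β * Real.exp (-ψ * ((180 / Real.pi) * Real.arcsin (h / d) - β)) := by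
    intro d; positivity
  have hD1 : ∀ d : ℝ, (1:ℝ) <
      1 + β * Real.exp (-ψ * ((180 / Real.pi) * Real.arcsin (h / d) - β)) := by
    intro d
    have := Real.exp_pos (-ψ * ((180 / Real.pi) * Real.arcsin (h / d) - β))
    nlinarith
  have hPpos : ∀ d : ℝ, 0 < P d := fun d => by
    simp only [hPdef]; positivity
  have hPlt1 : ∀ d : ℝ, P d < 1 := fun d => by
    simp only [hPdef]
    rw [div_lt_one (hDpos d)]
    exact hD1 d
  have hGlb : ∀ d : ℝ, μLoS ≤ μLoS * P d + μNLoS * (1 - P d) := by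
    intro d
    have h1 := hPpos d
    have h2 := hPlt1 d
    nlinarith
  have hmono : StrictMonoOn F (Set.Ici h) := by
    intro a ha b hb hab
    have ha' : h ≤ a := ha
    have hb' : h ≤ b := hb
    have ha0 : 0 < a := lt_of_lt_of_le hh ha'
    have hb0 : 0 < b := lt_of_lt_of_le hh hb'
    have harc : Real.arcsin (h / b) < Real.arcsin (h / a) := by
      apply Real.strictMonoOn_arcsin
      · constructor
        · have : 0 < h / b := by positivity
          linarith
        · rw [div_le_one hb0]; linarith
      · constructor
        · have : 0 < h / a := by positivity
          linarith
        · rw [div_le_one ha0]; exact ha'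
      · exact div_lt_div_of_pos_left hh (by positivity) hab
    have hpi : (0:ℝ) < 180 / Real.pi := by positivity
    have hexp : Real.exp (-ψ * ((180 / Real.pi) * Real.arcsin (h / a) - β))
        < Real.exp (-ψ * ((180 / Real.pi) * Real.arcsin (h / b) - β)) := by
      apply Real.exp_lt_exp.2
      nlinarith [mul_pos hψ (mul_pos hpi (sub_pos.2 harc))]
    have hPlt : P b < P a := by
      simp only [hPdef]
      apply one_div_lt_one_div_of_lt (hDpos a)
      nlinarith
    have hGlt : μLoS * P a + μNLoS * (1 - P a) < μLoS * P b + μNLoS * (1 - P b) := by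
      nlinarith
    have ha2 : a ^ 2 < b ^ 2 := by nlinarith
    have hGa : 0 < μLoS * P a + μNLoS * (1 - P a) := lt_of_lt_of_le hμ0 (hGlb a)
    exact mul_lt_mul ha2 hGlt.le hGa (sq_nonneg b)
  have hcont : ContinuousOn F (Set.Ici h) := by
    have hne : ∀ d ∈ Set.Ici h, d ≠ 0 := fun d hd => ne_of_gt (lt_of_lt_of_le hh hd)
    have hcP : ContinuousOn P (Set.Ici h) := by
      apply ContinuousOn.div continuousOn_const
      · apply ContinuousOn.add continuousOn_const
        apply ContinuousOn.mul continuousOn_const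
        apply Real.continuous_exp.comp_continuousOn
        apply ContinuousOn.mul continuousOn_const
        apply ContinuousOn.sub _ continuousOn_const
        apply ContinuousOn.mul continuousOn_const
        exact Real.continuous_arcsin.comp_continuousOn
          (ContinuousOn.div continuousOn_const continuousOn_id hne)
      · exact fun d _ => ne_of_gt (hDpos d)
    apply ContinuousOn.mul ((continuous_pow 2).continuousOn)
    exact ((hcP.const_smul μLoS).add ((continuousOn_const.sub hcP).const_smul μNLoS))
  set M : ℝ := max h (Real.sqrt (|T| / μLoS)) with hMdef
  have hM : h ≤ M := le_max_left _ _
  have hM0 : 0 ≤ M := le_trans hh.le hM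
  have hMsq : |T| / μLoS ≤ M ^ 2 := by
    have h1 : Real.sqrt (|T| / μLoS) ≤ M := le_max_right _ _
    have h2 : Real.sqrt (|T| / μLoS) ^ 2 = |T| / μLoS :=
      Real.sq_sqrt (by positivity)
    nlinarith [Real.sqrt_nonneg (|T| / μLoS)]
  have hFM : T ≤ F M := by
    have h1 : |T| ≤ μLoS * M ^ 2 := by
      rw [div_le_iff₀ hμ0] at hMsq; linarith
    have h2 : μLoS * M ^ 2 ≤ F M := by
      have := hGlb M
      have hM2 : (0:ℝ) ≤ M ^ 2 := sq_nonneg M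
      simp only [hFdef]
      nlinarith
    calc T ≤ |T| := le_abs_self T
    _ ≤ μLoS * M ^ 2 := h1
    _ ≤ F M := h2
  obtain ⟨c, hc, hFc⟩ := intermediate_value_Icc hM
    (hcont.mono (Set.Icc_subset_Ici_self)) ⟨hT', hFM⟩
  refine ⟨c, ⟨hc.1, hFc⟩, ?_⟩
  rintro y ⟨hy, hFy⟩
  exact hmono.injOn hy hc.1 (show F y = F c from hFy.trans hFc.symm)
end

section
/- Fix an altitude h > 0, constants β > 0, ψ > 0, κ₀ > 0, and excess path loss coefficients 0 < μLoS < μNLoS. With P(d) = 1/(1 + β·exp(−ψ·((180/π)·arcsin(h/d) − β))) and E(d) = μLoS·P(d) + μNLoS·(1 − P(d)), the average channel gain g(d) = (κ₀·d)⁻²·(E(d))⁻¹ is strictly decreasing on the interval [h, ∞). -/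
/-- The average channel gain g(d) = (κ₀d)⁻²·E(d)⁻¹ is strictly decreasing
on [h, ∞). -/
theorem stmt_10 (h β ψ μLoS μNLoS κ₀ : ℝ) (hh : 0 < h) (hβ : 0 < β) (hψ : 0 < ψ)
    (hμ0 : 0 < μLoS) (hμ : μLoS < μNLoS) (hκ : 0 < κ₀) :
    StrictAntiOn
      (fun d : ℝ =>
        ((κ₀ * d) ^ 2)⁻¹ *
          (μLoS * (1 / (1 + β * Real.exp (-ψ * ((180 / Real.pi) * Real.arcsin (h / d) - β))))
           + μNLoS * (1 - 1 / (1 + β * Real.exp (-ψ * ((180 / Real.pi) * Real.arcsin (h / d) - β)))))⁻¹)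
      (Set.Ici h) := by
  intro x hx y hy hxy
  simp only [Set.mem_Ici] at hx hy
  have hx0 : 0 < x := hh.trans_le hx
  have hy0 : 0 < y := hh.trans_le hy
  set P : ℝ → ℝ := fun d =>
    1 / (1 + β * Real.exp (-ψ * ((180 / Real.pi) * Real.arcsin (h / d) - β))) with hPdef
  have hDpos : ∀ d : ℝ, 1 < 1 + β * Real.exp (-ψ * ((180 / Real.pi) * Real.arcsin (h / d) - β)) := by
    intro d
    have := mul_pos hβ (Real.exp_pos (-ψ * ((180 / Real.pi) * Real.arcsin (h / d) - β)))
    linarith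
  have hPpos : ∀ d : ℝ, 0 < P d := by
    intro d
    exact div_pos one_pos (lt_trans one_pos (hDpos d))
  have hPlt1 : ∀ d : ℝ, P d < 1 := by
    intro d
    rw [hPdef]
    simp only
    rw [div_lt_one (lt_trans one_pos (hDpos d))]
    exact hDpos d
  -- P y < P x
  have harcsin : Real.arcsin (h / y) < Real.arcsin (h / x) := by
    apply Real.strictMonoOn_arcsin
    · constructor
      · linarith [div_pos hh hy0]
      · have : h / y ≤ h / x := div_le_div_of_nonneg_left hh.le hx0 hxy.le
        have hx1 : h / x ≤ 1 := (div_le_one hx0).mpr hx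
        linarith
    · constructor
      · linarith [div_pos hh hx0]
      · exact (div_le_one hx0).mpr hx
    · exact div_lt_div_of_pos_left hh hx0 hxy
  have hπ : 0 < 180 / Real.pi := div_pos (by norm_num) Real.pi_pos
  have hPanti : P y < P x := by
    rw [hPdef]
    simp only
    apply div_lt_div_of_pos_left one_pos (lt_trans one_pos (hDpos x))
    have h1 : (180 / Real.pi) * Real.arcsin (h / y) < (180 / Real.pi) * Real.arcsin (h / x) :=
      (mul_lt_mul_iff_right₀ hπ).mpr harcsin
    have h2 : -ψ * ((180 / Real.pi) * Real.arcsin (h / x) - β)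
        < -ψ * ((180 / Real.pi) * Real.arcsin (h / y) - β) := by nlinarith
    have h3 := Real.exp_lt_exp.mpr h2
    nlinarith
  -- E values
  have hEx : 0 < μLoS * P x + μNLoS * (1 - P x) := by
    have := hPpos x; have := hPlt1 x
    nlinarith
  have hEy : 0 < μLoS * P y + μNLoS * (1 - P y) := by
    have := hPpos y; have := hPlt1 y
    nlinarith
  have hE : μLoS * P x + μNLoS * (1 - P x) < μLoS * P y + μNLoS * (1 - P y) := by
    nlinarith
  -- combine
  have hsq : (κ₀ * x) ^ 2 < (κ₀ * y) ^ 2 := by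
    exact pow_lt_pow_left₀ ((mul_lt_mul_iff_right₀ hκ).mpr hxy) (mul_pos hκ hx0).le (by norm_num)
  have hsqx : 0 < (κ₀ * x) ^ 2 := pow_pos (mul_pos hκ hx0) 2
  have hsqy : 0 < (κ₀ * y) ^ 2 := pow_pos (mul_pos hκ hy0) 2
  have hprod : (κ₀ * x) ^ 2 * (μLoS * P x + μNLoS * (1 - P x))
      < (κ₀ * y) ^ 2 * (μLoS * P y + μNLoS * (1 - P y)) :=
    mul_lt_mul'' hsq hE hsqx.le hEx.le
  have lhs_pos : 0 < (κ₀ * x) ^ 2 * (μLoS * P x + μNLoS * (1 - P x)) := mul_pos hsqx hEx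
  simp only
  rw [← mul_inv, ← mul_inv]
  exact inv_strictAnti₀ lhs_pos hprod
end
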